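/- arXiv:1304.7509 — 5 statements merged into one kernel-verified Lean document; each statement's English description precedes it below -/
import Mathlib

section
/- Let κ > 1 be a fixed constant and let Ψ be an n×n complex matrix that is κ-strictly diagonally dominant. Then |det(Ψ)| ≥ (1 − 1/κ)ⁿ · ∏_{i=1}^n |Ψ(i,i)|. -/
/-!
Scaling each row of `Ψ` by `Ψ(i,i)⁻¹` gives a matrix with unit diagonal whose off-diagonal row sums
are at most `1/κ`, and the scaling multiplies the determinant by `∏ᵢ Ψ(i,i)⁻¹`. By Gershgorin's
theorem every eigenvalue of the scaled matrix lies within `1/κ` of `1`, so has modulus at least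
`1 - 1/κ`; over `ℂ` the determinant is the product of the `n` eigenvalues.
-/

open Finset

namespace Matrix

variable {K ι : Type*} [NormedField K] [Fintype ι] [DecidableEq ι]

theorem le_norm_of_isRoot_charpoly {A : Matrix ι ι K} {c : ℝ}
    (hA : ∀ i, c ≤ ‖A i i‖ - ∑ j ∈ univ.erase i, ‖A i j‖) {μ : K} (hμ : A.charpoly.IsRoot μ) :
    c ≤ ‖μ‖ := by
  have hμ' : Module.End.HasEigenvalue (toLin' A) μ := by
    rwa [Module.End.hasEigenvalue_iff_isRoot_charpoly, charpoly_toLin']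
  obtain ⟨k, hk⟩ := eigenvalue_mem_ball hμ'
  rw [Metric.mem_closedBall, dist_comm, dist_eq_norm] at hk
  linarith [hA k, norm_sub_norm_le (A k k) μ]

theorem pow_card_le_norm_det [IsAlgClosed K] {A : Matrix ι ι K} {c : ℝ} (hc : 0 ≤ c)
    (hA : ∀ i, c ≤ ‖A i i‖ - ∑ j ∈ univ.erase i, ‖A i j‖) :
    c ^ Fintype.card ι ≤ ‖A.det‖ := by
  lift c to NNReal using hc
  have hroots : ∀ x ∈ A.charpoly.roots.map nnnorm, c ≤ x := by
    simp only [Multiset.mem_map]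
    rintro _ ⟨μ, hμ, rfl⟩
    exact le_norm_of_isRoot_charpoly hA (Polynomial.isRoot_of_mem_roots hμ)
  have hcard : (A.charpoly.roots.map nnnorm).card = Fintype.card ι := by
    rw [Multiset.card_map, IsAlgClosed.card_roots_eq_natDegree, charpoly_natDegree_eq_dim]
  rw [← coe_nnnorm, det_eq_prod_roots_charpoly, ← NNReal.coe_pow, NNReal.coe_le_coe,
    ← hcard]
  exact (Multiset.pow_card_le_prod hroots).trans_eq (map_multiset_prod (nnnormHom (α := K)) _).symm

theorem one_sub_inv_le_of_dominant {A : Matrix ι ι K} {κ : ℝ} (hκ : 0 < κ) {i : ι}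
    (hi : A i i ≠ 0) (hdd : κ * ∑ j ∈ univ.erase i, ‖A i j‖ ≤ ‖A i i‖) :
    1 - 1 / κ ≤ ‖(diagonal (fun i => (A i i)⁻¹) * A) i i‖ -
      ∑ j ∈ univ.erase i, ‖(diagonal (fun i => (A i i)⁻¹) * A) i j‖ := by
  have hpos : 0 < ‖A i i‖ := norm_pos_iff.mpr hi
  simp only [diagonal_mul, inv_mul_cancel₀ hi, norm_one, norm_mul, norm_inv, ← mul_sum]
  gcongr 1 - ?_
  rw [inv_mul_eq_div, div_le_div_iff₀ hpos hκ]
  linarith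

theorem pow_mul_prod_le_norm_det_of_dominant [IsAlgClosed K] {A : Matrix ι ι K} {κ : ℝ}
    (hκ : 1 ≤ κ) (hdd : ∀ i, κ * ∑ j ∈ univ.erase i, ‖A i j‖ ≤ ‖A i i‖) :
    (1 - 1 / κ) ^ Fintype.card ι * ∏ i, ‖A i i‖ ≤ ‖A.det‖ := by
  by_cases hz : ∃ i, A i i = 0
  · obtain ⟨i, hi⟩ := hz
    rw [prod_eq_zero (mem_univ i) (by simp [hi]), mul_zero]
    exact norm_nonneg _
  push Not at hz
  have hκ0 : 0 < κ := zero_lt_one.trans_le hκ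
  have hscaled := pow_card_le_norm_det (sub_nonneg.mpr (div_le_one_of_le₀ hκ hκ0.le))
    fun i => one_sub_inv_le_of_dominant hκ0 (hz i) (hdd i)
  rw [det_mul, det_diagonal, norm_mul, norm_prod] at hscaled
  simp only [norm_inv, prod_inv_distrib] at hscaled
  rwa [inv_mul_eq_div, le_div_iff₀ (prod_pos fun i _ => norm_pos_iff.mpr (hz i))] at hscaled

end Matrix

/-- If `Ψ` is `κ`-strictly diagonally dominant (`κ > 1`), then
`|det Ψ| ≥ (1 − 1/κ)^n ∏ᵢ |Ψ(i,i)|`. -/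
theorem stmt_2 {n : ℕ} (κ : ℝ) (hκ : 1 < κ) (Ψ : Matrix (Fin n) (Fin n) ℂ)
    (hdd : ∀ i : Fin n,
      κ * ∑ j ∈ Finset.univ.erase i, ‖Ψ i j‖ ≤ ‖Ψ i i‖) :
    (1 - 1 / κ) ^ n * ∏ i : Fin n, ‖Ψ i i‖ ≤ ‖Ψ.det‖ := by
  simpa using Ψ.pow_mul_prod_le_norm_det_of_dominant hκ.le hdd
end

section
/- Let Ψ be an n×n complex matrix that is strictly diagonally dominant, i.e., |Ψ(i,i)| > ∑_{j≠i} |Ψ(i,j)| for all i = 1,…,n. Then the determinant of Ψ satisfies |det(Ψ)| ≥ ∏_{i=1}^n ( |Ψ(i,i)| − ∑_{j≠i} |Ψ(i,j)| ). -/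
/-!
Eliminating the first column with the pivot `Ψ 0 0` gives `det Ψ = Ψ 0 0 * det S`, where `S` is the
Schur complement of the pivot. The triangle inequality, together with diagonal dominance of row `0`,
shows that each row of `S` has at least the dominance margin of the corresponding row of `Ψ`:
the entries `Ψ (i+1) 0`, which are no longer counted, pay for the multiples of row `0` that were
subtracted. Hence `S` is again strictly diagonally dominant, and induction on `n` finishes,
since `‖Ψ 0 0‖` is at least the margin of row `0`.
-/

open Finset

namespace Fin

variable {M : Type*} [AddCommGroup M] {n : ℕ}

theorem sum_univ_erase_zero (f : Fin (n + 1) → M) :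
    ∑ j ∈ univ.erase 0, f j = ∑ j : Fin n, f j.succ := by
  rw [sum_erase_eq_sub (mem_univ _), sum_univ_succ, add_sub_cancel_left]

theorem sum_univ_erase_succ (f : Fin (n + 1) → M) (i : Fin n) :
    ∑ j ∈ univ.erase i.succ, f j = f 0 + ∑ j ∈ univ.erase i, f j.succ := by
  rw [sum_erase_eq_sub (mem_univ _), sum_erase_eq_sub (mem_univ _), sum_univ_succ, add_sub_assoc]

end Fin

namespace Matrix

variable {𝕜 : Type*} [NormedField 𝕜]

def diagMargin {ι : Type*} [Fintype ι] [DecidableEq ι] (A : Matrix ι ι 𝕜) (i : ι) : ℝ :=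
  ‖A i i‖ - ∑ j ∈ univ.erase i, ‖A i j‖

def pivotSchur {n : ℕ} (A : Matrix (Fin (n + 1)) (Fin (n + 1)) 𝕜) : Matrix (Fin n) (Fin n) 𝕜 :=
  of fun i j => A i.succ j.succ - A i.succ 0 / A 0 0 * A 0 j.succ

theorem diagMargin_le_norm_diag {ι : Type*} [Fintype ι] [DecidableEq ι] (A : Matrix ι ι 𝕜)
    (i : ι) : diagMargin A i ≤ ‖A i i‖ :=
  sub_le_self _ (sum_nonneg fun _ _ => norm_nonneg _)

section Pivot

variable {n : ℕ} (A : Matrix (Fin (n + 1)) (Fin (n + 1)) 𝕜)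

theorem det_eq_mul_det_pivotSchur (h : A 0 0 ≠ 0) : A.det = A 0 0 * (pivotSchur A).det := by
  set c : Fin (n + 1) → 𝕜 := Fin.cases 0 fun i => A i.succ 0 / A 0 0
  set B : Matrix (Fin (n + 1)) (Fin (n + 1)) 𝕜 := of fun i j => A i j - c i * A 0 j
  have hAB : A.det = B.det :=
    det_eq_of_forall_row_eq_smul_add_const c 0 rfl fun i j => by
      cases i using Fin.cases <;> simp [B, c]
  have hB_col : ∀ i : Fin n, B i.succ 0 = 0 := fun i => by
    simp [B, c, div_mul_cancel₀ _ h]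
  have hB_minor : B.submatrix (Fin.succAbove 0) Fin.succ = pivotSchur A := by
    ext i j
    simp [B, c, pivotSchur]
  rw [hAB, det_succ_column_zero, Fin.sum_univ_succ, hB_minor]
  simp [hB_col, B, c]

theorem diagMargin_succ_le_diagMargin_pivotSchur (h0 : 0 ≤ diagMargin A 0) (i : Fin n) :
    diagMargin A i.succ ≤ diagMargin (pivotSchur A) i := by
  set c := A i.succ 0 / A 0 0
  have h_diag : ‖A i.succ i.succ‖ - ‖c * A 0 i.succ‖ ≤ ‖pivotSchur A i i‖ := norm_sub_norm_le _ _
  have h_off : ∑ j ∈ univ.erase i, ‖pivotSchur A i j‖ ≤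
      ∑ j ∈ univ.erase i, ‖A i.succ j.succ‖ + ∑ j ∈ univ.erase i, ‖c * A 0 j.succ‖ := by
    rw [← sum_add_distrib]
    exact sum_le_sum fun j _ => norm_sub_le _ _
  have h_row0 : ‖c * A 0 i.succ‖ + ∑ j ∈ univ.erase i, ‖c * A 0 j.succ‖ =
      ‖c‖ * ∑ j : Fin n, ‖A 0 j.succ‖ := by
    rw [add_sum_erase _ (fun j => ‖c * A 0 j.succ‖) (mem_univ i), mul_sum]
    simp only [norm_mul]
  have h_cost : ‖c‖ * ∑ j : Fin n, ‖A 0 j.succ‖ ≤ ‖A i.succ 0‖ :=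
    calc ‖c‖ * ∑ j : Fin n, ‖A 0 j.succ‖
        ≤ ‖c‖ * ‖A 0 0‖ := by
          gcongr
          rw [diagMargin, Fin.sum_univ_erase_zero] at h0
          linarith
      _ ≤ ‖A i.succ 0‖ := by
          rcases eq_or_ne (A 0 0) 0 with h | h
          · simp [h]
          · rw [norm_div, div_mul_cancel₀ _ (norm_ne_zero_iff.mpr h)]
  rw [diagMargin, diagMargin, Fin.sum_univ_erase_succ (fun j => ‖A i.succ j‖) i]
  linarith

end Pivot

theorem prod_diagMargin_le_norm_det :
    ∀ {n : ℕ} (A : Matrix (Fin n) (Fin n) 𝕜), (∀ i, 0 < diagMargin A i) →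
      ∏ i, diagMargin A i ≤ ‖A.det‖
  | 0, A, _ => by simp
  | n + 1, A, hA => by
    have h_pivot : A 0 0 ≠ 0 := norm_pos_iff.mp ((hA 0).trans_le (diagMargin_le_norm_diag A 0))
    have h_schur : ∀ i, 0 < diagMargin (pivotSchur A) i := fun i =>
      (hA i.succ).trans_le (diagMargin_succ_le_diagMargin_pivotSchur A (hA 0).le i)
    calc ∏ i, diagMargin A i
        = diagMargin A 0 * ∏ i : Fin n, diagMargin A i.succ := Fin.prod_univ_succ _
      _ ≤ ‖A 0 0‖ * ∏ i, diagMargin (pivotSchur A) i := by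
          refine mul_le_mul (diagMargin_le_norm_diag A 0) ?_
            (prod_nonneg fun i _ => (hA i.succ).le) (norm_nonneg _)
          exact prod_le_prod (fun i _ => (hA i.succ).le)
            fun i _ => diagMargin_succ_le_diagMargin_pivotSchur A (hA 0).le i
      _ ≤ ‖A 0 0‖ * ‖(pivotSchur A).det‖ := by
          gcongr
          exact prod_diagMargin_le_norm_det _ h_schur
      _ = ‖A.det‖ := by rw [det_eq_mul_det_pivotSchur A h_pivot, norm_mul]

end Matrix

/-- Ostrowski's bound: if `Ψ` is strictly diagonally dominant, then
`|det Ψ| ≥ ∏ᵢ (|Ψ(i,i)| − ∑_{j≠i} |Ψ(i,j)|)`. -/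
theorem stmt_3 {n : ℕ} (Ψ : Matrix (Fin n) (Fin n) ℂ)
    (hdd : ∀ i : Fin n,
      ∑ j ∈ Finset.univ.erase i, ‖Ψ i j‖ < ‖Ψ i i‖) :
    ∏ i : Fin n, (‖Ψ i i‖ - ∑ j ∈ Finset.univ.erase i, ‖Ψ i j‖) ≤
      ‖Ψ.det‖ :=
  Ψ.prod_diagMargin_le_norm_det fun i => sub_pos.mpr (hdd i)
end

section
/- Let A ∈ ℂ^{L×L} be Hermitian positive semidefinite and let D be the L×L diagonal matrix with positive real diagonal entries σ₁²,…,σ_L² (viewed as a complex matrix). Define for α > 0 the function C_WZ(α) = log₂( det(A + (1+α)D) / det(αD) ), which is a positive real number since A + (1+α)D is Hermitian positive definite. Then C_WZ is continuous and strictly decreasing on (0,∞), C_WZ(α) → +∞ as α → 0⁺, and C_WZ(α) → 0 as α → ∞; consequently, for every C > 0 there exists a unique α > 0 with C_WZ(α) = C. -/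
open Real Filter Set Topology Matrix
open scoped ComplexOrder

/-!
With `F = D^{1/2}` we have `A + tD = F (F⁻¹AF⁻¹ + t) F`, so if `νᵢ ≥ 0` are the eigenvalues of
`F⁻¹AF⁻¹` then `det(A + (1+α)D) / det(αD) = ∏ᵢ (1 + μᵢ/α)` with `μᵢ = νᵢ + 1 > 0`. Hence
`C_WZ(α) = ∑ᵢ log₂(1 + μᵢ/α)`, a nonempty sum of positive, continuous, strictly decreasing functions,
each tending to `+∞` at `0⁺` and to `0` at `∞`; the intermediate value theorem does the rest.
-/

theorem Matrix.IsHermitian.det_add_smul_one {𝕜 n : Type*} [RCLike 𝕜] [Fintype n] [DecidableEq n]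
    {N : Matrix n n 𝕜} (hN : N.IsHermitian) (t : ℝ) :
    (N + t • 1).det = ∏ i, ((hN.eigenvalues i + t : ℝ) : 𝕜) := by
  have hconj : N + t • 1 = Unitary.conjStarAlgAut 𝕜 _ hN.eigenvectorUnitary
      (diagonal fun i => ((hN.eigenvalues i + t : ℝ) : 𝕜)) := by
    conv_lhs => rw [hN.spectral_theorem]
    rw [RCLike.real_smul_eq_coe_smul (K := 𝕜), ← map_one (Unitary.conjStarAlgAut 𝕜 _ _),
      ← map_smul, ← map_add, smul_one_eq_diagonal, diagonal_add]
    simp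
  rw [hconj, Unitary.conjStarAlgAut_apply, det_mul_right_comm,
    Unitary.mul_star_self_of_mem hN.eigenvectorUnitary.2, one_mul, det_diagonal]

theorem Matrix.PosSemidef.exists_det_add_smul_diagonal {𝕜 n : Type*} [RCLike 𝕜] [Fintype n]
    [DecidableEq n] {A : Matrix n n 𝕜} (hA : A.PosSemidef) {d : n → ℝ} (hd : ∀ i, 0 < d i) :
    ∃ ν : n → ℝ, (∀ i, 0 ≤ ν i) ∧ ∀ t : ℝ,
      (A + t • diagonal fun i => (d i : 𝕜)).det = (((∏ i, d i) * ∏ i, (ν i + t) : ℝ) : 𝕜) := by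
  set F : Matrix n n 𝕜 := diagonal fun i => (√(d i) : 𝕜)
  set G : Matrix n n 𝕜 := diagonal fun i => ((√(d i))⁻¹ : 𝕜)
  have hsqrt : ∀ i, (√(d i) : 𝕜) ≠ 0 := fun i => by
    exact_mod_cast (Real.sqrt_pos.mpr (hd i)).ne'
  have hG : Gᴴ = G := by
    simp [G, diagonal_conjTranspose]
  have hN : (G * A * G).PosSemidef := by
    simpa [hG] using hA.conjTranspose_mul_mul_same G
  refine ⟨hN.1.eigenvalues, hN.eigenvalues_nonneg, fun t => ?_⟩
  have hfactor : A + t • diagonal (fun i => (d i : 𝕜)) = F * (G * A * G + t • 1) * F := by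
    ext i j
    simp only [add_apply, smul_apply, diagonal_apply, smul_ite, RCLike.real_smul_ofReal, smul_zero,
      mul_diagonal, diagonal_mul, one_apply, F, G]
    split_ifs with hij
    · subst hij
      have hsq : (√(d i) : 𝕜) * (√(d i) : 𝕜) = d i := by
        rw [← RCLike.ofReal_mul, Real.mul_self_sqrt (hd i).le]
      rw [RCLike.real_smul_eq_coe_smul (K := 𝕜), smul_eq_mul, mul_one, ← hsq]
      field_simp [hsqrt i]
    · rw [add_zero, add_zero]
      field_simp [hsqrt i, hsqrt j]
  rw [hfactor, det_mul, det_mul, hN.1.det_add_smul_one, det_diagonal]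
  have hF : (∏ i, (√(d i) : 𝕜)) * ∏ i, (√(d i) : 𝕜) = ((∏ i, d i : ℝ) : 𝕜) := by
    rw [← Finset.prod_mul_distrib, RCLike.ofReal_prod]
    refine Finset.prod_congr rfl fun i _ => ?_
    rw [← RCLike.ofReal_mul, Real.mul_self_sqrt (hd i).le]
  rw [mul_right_comm, hF]
  push_cast
  rfl

theorem Matrix.PosSemidef.exists_det_ratio_eq_prod {n : Type*} [Fintype n] [DecidableEq n]
    {A : Matrix n n ℂ} (hA : A.PosSemidef) {d : n → ℝ} (hd : ∀ i, 0 < d i) :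
    ∃ μ : n → ℝ, (∀ i, 0 < μ i) ∧ ∀ α : ℝ, α ≠ 0 →
      (A + (1 + α) • diagonal fun i => (d i : ℂ)).det.re /
        (α • diagonal fun i => (d i : ℂ)).det.re = ∏ i, (1 + μ i / α) := by
  obtain ⟨ν, hν, hdet⟩ := hA.exists_det_add_smul_diagonal hd
  refine ⟨fun i => ν i + 1, fun i => by linarith [hν i], fun α hα => ?_⟩
  have hden : (α • diagonal fun i => (d i : ℂ)).det = (((∏ i, d i) * ∏ _i : n, α : ℝ) : ℂ) := by
    rw [← diagonal_smul, det_diagonal]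
    simp [Finset.prod_mul_distrib, mul_comm]
  have hprod : 0 < ∏ i, d i := Finset.prod_pos fun i _ => hd i
  have hnum : (A + (1 + α) • diagonal fun i => (d i : ℂ)).det =
      (((∏ i, d i) * ∏ i, (ν i + (1 + α)) : ℝ) : ℂ) := hdet (1 + α)
  rw [hnum, hden, Complex.ofReal_re, Complex.ofReal_re,
    mul_div_mul_left _ _ hprod.ne', ← Finset.prod_div_distrib]
  refine Finset.prod_congr rfl fun i _ => ?_
  field_simp
  ring

theorem StrictAntiOn.existsUnique_eq_of_tendsto {f : ℝ → ℝ} {a l C : ℝ}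
    (hcont : ContinuousOn f (Ioi a)) (hanti : StrictAntiOn f (Ioi a))
    (hleft : Tendsto f (𝓝[>] a) atTop) (hright : Tendsto f atTop (𝓝 l)) (hC : l < C) :
    ∃! x, a < x ∧ f x = C := by
  obtain ⟨x₀, hCx₀, hx₀⟩ :=
    ((hleft.eventually (eventually_gt_atTop C)).and self_mem_nhdsWithin).exists
  obtain ⟨x₁, hx₁C, hx₀x₁⟩ :=
    ((hright.eventually (eventually_lt_nhds hC)).and (eventually_ge_atTop x₀)).exists
  obtain ⟨x, hx, hfx⟩ := intermediate_value_Icc' hx₀x₁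
    (hcont.mono fun y hy => lt_of_lt_of_le hx₀ hy.1) ⟨hx₁C.le, hCx₀.le⟩
  have hax : a < x := lt_of_lt_of_le hx₀ hx.1
  exact ⟨x, ⟨hax, hfx⟩, fun y ⟨hay, hfy⟩ => hanti.injOn hay hax (hfy.trans hfx.symm)⟩

section OneAddDiv

variable {b μ : ℝ}

theorem logb_one_add_div_pos (hb : 1 < b) (hμ : 0 < μ) {α : ℝ} (hα : 0 < α) :
    0 < logb b (1 + μ / α) :=
  logb_pos hb (lt_add_of_pos_right 1 (div_pos hμ hα))

theorem continuousOn_logb_one_add_div (hμ : 0 ≤ μ) :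
    ContinuousOn (fun α => logb b (1 + μ / α)) (Ioi 0) :=
  (continuousOn_const.add (continuousOn_const.div continuousOn_id fun _ hα => ne_of_gt hα)).logb
    fun _ hα => (add_pos_of_pos_of_nonneg one_pos (div_nonneg hμ (le_of_lt hα))).ne'

theorem strictAntiOn_logb_one_add_div (hb : 1 < b) (hμ : 0 < μ) :
    StrictAntiOn (fun α => logb b (1 + μ / α)) (Ioi 0) := fun _ hx _ hy hxy =>
  logb_lt_logb hb (add_pos one_pos (div_pos hμ hy))
    (add_lt_add_right (div_lt_div_of_pos_left hμ hx hxy) 1)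

theorem tendsto_logb_one_add_div_nhdsGT_zero (hb : 1 < b) (hμ : 0 < μ) :
    Tendsto (fun α => logb b (1 + μ / α)) (𝓝[>] 0) atTop := by
  refine (tendsto_logb_atTop hb).comp (tendsto_atTop_add_const_left _ 1 ?_)
  exact (tendsto_inv_nhdsGT_zero.const_mul_atTop hμ).congr fun α => (div_eq_mul_inv μ α).symm

theorem tendsto_logb_one_add_div_atTop (b μ : ℝ) :
    Tendsto (fun α => logb b (1 + μ / α)) atTop (𝓝 0) := by
  have h : Tendsto (fun α => 1 + μ / α) atTop (𝓝 1) := by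
    simpa using tendsto_const_nhds.add ((tendsto_const_nhds (x := μ)).div_atTop tendsto_id)
  have h' := (continuousAt_logb (b := b) one_ne_zero).tendsto.comp h
  rwa [logb_one] at h'

end OneAddDiv

section SumOneAddDiv

variable {ι : Type*} [Fintype ι] {b : ℝ} {μ : ι → ℝ}

theorem sum_logb_one_add_div_pos [Nonempty ι] (hb : 1 < b) (hμ : ∀ i, 0 < μ i) {α : ℝ}
    (hα : 0 < α) : 0 < ∑ i, logb b (1 + μ i / α) :=
  Finset.sum_pos (fun i _ => logb_one_add_div_pos hb (hμ i) hα) Finset.univ_nonempty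

theorem continuousOn_sum_logb_one_add_div (hμ : ∀ i, 0 ≤ μ i) :
    ContinuousOn (fun α => ∑ i, logb b (1 + μ i / α)) (Ioi 0) :=
  continuousOn_finsetSum _ fun i _ => continuousOn_logb_one_add_div (hμ i)

theorem strictAntiOn_sum_logb_one_add_div [Nonempty ι] (hb : 1 < b) (hμ : ∀ i, 0 < μ i) :
    StrictAntiOn (fun α => ∑ i, logb b (1 + μ i / α)) (Ioi 0) := fun _ hx _ hy hxy =>
  Finset.sum_lt_sum_of_nonempty Finset.univ_nonempty fun i _ =>
    strictAntiOn_logb_one_add_div hb (hμ i) hx hy hxy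

theorem tendsto_sum_logb_one_add_div_nhdsGT_zero [Nonempty ι] (hb : 1 < b) (hμ : ∀ i, 0 < μ i) :
    Tendsto (fun α => ∑ i, logb b (1 + μ i / α)) (𝓝[>] 0) atTop := by
  obtain ⟨i₀⟩ := ‹Nonempty ι›
  refine tendsto_atTop_mono' _ ?_ (tendsto_logb_one_add_div_nhdsGT_zero hb (hμ i₀))
  filter_upwards [self_mem_nhdsWithin] with α hα
  exact Finset.single_le_sum (fun i _ => (logb_one_add_div_pos hb (hμ i) hα).le)
    (Finset.mem_univ i₀)

theorem tendsto_sum_logb_one_add_div_atTop (b : ℝ) (μ : ι → ℝ) :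
    Tendsto (fun α => ∑ i, logb b (1 + μ i / α)) atTop (𝓝 0) := by
  simpa using tendsto_finsetSum Finset.univ fun i _ => tendsto_logb_one_add_div_atTop b (μ i)

end SumOneAddDiv

/-- Properties of the Wyner-Ziv backhaul rate function
`C_WZ(α) = log₂(det(A + (1+α)D) / det(αD))` with quantization noise levels `qᵢ = ασᵢ²`:
it is positive, continuous and strictly decreasing on `(0,∞)`, tends to `+∞` as `α → 0⁺`
and to `0` as `α → ∞`; consequently for every `C > 0` there is a unique `α > 0` with
`C_WZ(α) = C`. -/
theorem stmt_5 {L : ℕ} (hL : 0 < L) (A : Matrix (Fin L) (Fin L) ℂ) (hA : A.PosSemidef)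
    (σ : Fin L → ℝ) (hσ : ∀ i, 0 < σ i) :
    let D : Matrix (Fin L) (Fin L) ℂ := Matrix.diagonal fun i => (σ i : ℂ)
    let CWZ : ℝ → ℝ := fun α =>
      Real.logb 2 ((A + (1 + α) • D).det.re / ((α • D).det.re))
    (∀ α ∈ Set.Ioi (0 : ℝ), 0 < CWZ α) ∧
      ContinuousOn CWZ (Set.Ioi 0) ∧
      StrictAntiOn CWZ (Set.Ioi 0) ∧
      Filter.Tendsto CWZ (nhdsWithin 0 (Set.Ioi 0)) Filter.atTop ∧
      Filter.Tendsto CWZ Filter.atTop (nhds 0) ∧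
      ∀ C : ℝ, 0 < C → ∃! α : ℝ, 0 < α ∧ CWZ α = C := by
  intro D CWZ
  obtain ⟨μ, hμ, hratio⟩ := hA.exists_det_ratio_eq_prod hσ
  have : Nonempty (Fin L) := ⟨⟨0, hL⟩⟩
  have hCWZ : EqOn (fun α => ∑ i, logb 2 (1 + μ i / α)) CWZ (Ioi 0) := fun α hα => by
    simp only [CWZ, D, hratio α (ne_of_gt hα)]
    rw [logb_prod _ _ fun i _ => (add_pos one_pos (div_pos (hμ i) hα)).ne']
  have hcont : ContinuousOn CWZ (Ioi 0) :=
    (continuousOn_sum_logb_one_add_div fun i => (hμ i).le).congr hCWZ.symm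
  have hanti : StrictAntiOn CWZ (Ioi 0) :=
    (strictAntiOn_sum_logb_one_add_div one_lt_two hμ).congr hCWZ
  have hleft : Tendsto CWZ (𝓝[>] 0) atTop :=
    (tendsto_sum_logb_one_add_div_nhdsGT_zero one_lt_two hμ).congr' hCWZ.eventuallyEq_nhdsWithin
  have hright : Tendsto CWZ atTop (𝓝 0) :=
    (tendsto_sum_logb_one_add_div_atTop 2 μ).congr' <|
      (eventually_gt_atTop 0).mono fun α hα => hCWZ hα
  exact ⟨fun α hα => hCWZ hα ▸ sum_logb_one_add_div_pos one_lt_two hμ hα, hcont, hanti, hleft,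
    hright, fun C hC => hanti.existsUnique_eq_of_tendsto hcont hleft hright hC⟩
end

section
/- (Constant-gap optimality of VMAC-SU under diagonal dominance, determinant form.) Let L ≥ 1 and κ > 1, let A ∈ ℂ^{L×L} be Hermitian positive semidefinite (representing the received signal covariance H K_X H^H), and let D be the L×L diagonal matrix with positive real diagonal entries σ₁²,…,σ_L² (the background noise covariance). Suppose that A + D is κ-strictly diagonally dominant. Then for every C > 0 there exists α > 0 (corresponding to quantization noise levels qᵢ = ασᵢ²) such that: (i) ∑_{i=1}^L log₂( (A(i,i) + (1+α)σᵢ²) / (α σᵢ²) ) ≤ C, and (ii) min{ log₂( det(A + D) / det(D) ), C } − log₂( det(A + (1+α)D) / det((1+α)D) ) < L·( 1 + log₂( κ/(κ−1) ) ), where A(i,i) denotes the i-th diagonal entry of A (a nonnegative real since A is positive semidefinite). -/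
/-!
Write `aᵢ = A(i,i)`. By Hadamard's inequality, `det(A + D) ≤ ∏ (aᵢ + σᵢ)`, which bounds the
cut-set term by `∑ log₂((aᵢ + σᵢ)/σᵢ)`. For `c ≥ 1`, dividing each row of `A + cD` by its
diagonal entry leaves a matrix whose Gershgorin discs lie in the closed ball of radius `1/κ`
about `1`, so all its eigenvalues have modulus at least `1 - 1/κ`; hence
`det(A + cD) ≥ (1 - 1/κ)^L ∏ (aᵢ + cσᵢ)`, and the rate at `c = 1 + α` is at least
`∑ log₂((aᵢ + (1+α)σᵢ)/((1+α)σᵢ)) - L log₂(κ/(κ-1))`.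

What remains is scalar. The backhaul `∑ log₂((aᵢ + (1+α)σᵢ)/(ασᵢ))` is continuous in `α > 0` and
tends to `0`. If `α = 1` meets the budget, the `i`-th term of the gap is
`log₂(2(aᵢ + σᵢ)/(aᵢ + 2σᵢ)) < 1`; otherwise the intermediate value theorem gives `α > 1` with
backhaul exactly `C`, and the `i`-th term is `log₂((1+α)/α) < 1`.
-/

open Finset Filter Topology
open scoped ComplexOrder Matrix

section Hadamard

variable {𝕜 n : Type*} [RCLike 𝕜] [Fintype n] [DecidableEq n]

theorem Matrix.PosSemidef.re_det_le_one_of_diag_eq_one {T : Matrix n n 𝕜} (hT : T.PosSemidef)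
    (hdiag : ∀ i, T i i = 1) :
    RCLike.re T.det ≤ 1 := by
  set μ := hT.1.eigenvalues
  have htrace : ∑ i, μ i = Fintype.card n := by
    have := hT.1.trace_eq_sum_eigenvalues
    simp only [Matrix.trace, Matrix.diag, hdiag, sum_const, card_univ, nsmul_one] at this
    exact_mod_cast this.symm
  calc RCLike.re T.det = ∏ i, μ i := by
        rw [hT.1.det_eq_prod_eigenvalues, ← RCLike.ofReal_prod, RCLike.ofReal_re]
    _ ≤ ∏ i, Real.exp (μ i - 1) :=
        prod_le_prod (fun i _ => hT.eigenvalues_nonneg i)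
          (fun i _ => by linarith [Real.add_one_le_exp (μ i - 1)])
    _ = 1 := by
        rw [← Real.exp_sum, sum_sub_distrib, htrace, sum_const, card_univ, nsmul_one, sub_self,
          Real.exp_zero]

theorem Matrix.PosDef.re_det_le_prod_re_diag {B : Matrix n n 𝕜} (hB : B.PosDef) :
    RCLike.re B.det ≤ ∏ i, RCLike.re (B i i) := by
  have hdiag_pos : ∀ i, 0 < RCLike.re (B i i) := fun i => RCLike.pos_iff.mp hB.diag_pos |>.1
  set s : n → ℝ := fun i => (√(RCLike.re (B i i)))⁻¹
  have hs : ∀ i, s i * RCLike.re (B i i) * s i = 1 := fun i => by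
    simp only [s, mul_right_comm _ (RCLike.re _), ← mul_inv, Real.mul_self_sqrt (hdiag_pos i).le,
      inv_mul_cancel₀ (hdiag_pos i).ne']
  set E : Matrix n n 𝕜 := Matrix.diagonal fun i => (s i : 𝕜)
  have hunit : ∀ i, (Eᴴ * B * E) i i = 1 := fun i => by
    simp only [E, Matrix.diagonal_conjTranspose, Matrix.mul_diagonal, Matrix.diagonal_mul,
      Pi.star_apply, RCLike.star_def, RCLike.conj_ofReal]
    rw [← hB.1.coe_re_apply_self i]
    exact_mod_cast hs i
  have hdet : RCLike.re (Eᴴ * B * E).det = (∏ i, s i) * RCLike.re B.det * ∏ i, s i := by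
    rw [Matrix.det_mul, Matrix.det_mul, Matrix.det_conjTranspose, Matrix.det_diagonal,
      ← RCLike.ofReal_prod, RCLike.star_def, RCLike.conj_ofReal, RCLike.re_mul_ofReal,
      RCLike.re_ofReal_mul]
  have hprod : (∏ i, s i) * (∏ i, RCLike.re (B i i)) * ∏ i, s i = 1 := by
    rw [← prod_mul_distrib, ← prod_mul_distrib]
    exact prod_eq_one fun i _ => hs i
  have hT := (hB.posSemidef.conjTranspose_mul_mul_same E).re_det_le_one_of_diag_eq_one hunit
  calc RCLike.re B.det = RCLike.re (Eᴴ * B * E).det * ∏ i, RCLike.re (B i i) := by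
        rw [hdet]; linear_combination (-RCLike.re B.det) * hprod
    _ ≤ ∏ i, RCLike.re (B i i) :=
        mul_le_of_le_one_left (prod_nonneg fun i _ => (hdiag_pos i).le) hT

end Hadamard

section Gershgorin

variable {K n : Type*} [NormedField K] [Fintype n] [DecidableEq n]

theorem Matrix.norm_sub_one_le_of_isRoot_charpoly {N : Matrix n n K} {r : ℝ}
    (hdiag : ∀ k, N k k = 1) (hrow : ∀ k, ∑ j ∈ univ.erase k, ‖N k j‖ ≤ r) {μ : K}
    (hμ : N.charpoly.IsRoot μ) :
    ‖μ - 1‖ ≤ r := by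
  rw [← Matrix.charpoly_toLin', ← Module.End.hasEigenvalue_iff_isRoot_charpoly] at hμ
  obtain ⟨k, hk⟩ := eigenvalue_mem_ball hμ
  rw [mem_closedBall_iff_norm, hdiag] at hk
  exact hk.trans (hrow k)

theorem Matrix.one_sub_pow_card_le_norm_det [IsAlgClosed K] {N : Matrix n n K} {r : ℝ}
    (hr : r ≤ 1) (hdiag : ∀ k, N k k = 1) (hrow : ∀ k, ∑ j ∈ univ.erase k, ‖N k j‖ ≤ r) :
    (1 - r) ^ Fintype.card n ≤ ‖N.det‖ := by
  have hroots : ∀ μ ∈ N.charpoly.roots, 1 - r ≤ ‖μ‖ := fun μ hμ => by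
    have hball := N.norm_sub_one_le_of_isRoot_charpoly hdiag hrow
      ((Polynomial.mem_roots N.charpoly_monic.ne_zero).mp hμ)
    have htriangle := norm_sub_norm_le (1 : K) μ
    rw [norm_one, norm_sub_rev] at htriangle
    linarith
  have hcard : Multiset.card N.charpoly.roots = Fintype.card n := by
    rw [← (IsAlgClosed.splits N.charpoly).natDegree_eq_card_roots,
      Matrix.charpoly_natDegree_eq_dim]
  rw [N.det_eq_prod_roots_charpoly, ← hcard, ← Multiset.prod_replicate, ← Multiset.map_const']
  exact (Multiset.prod_map_le_prod_map₀ _ _ (fun _ _ => sub_nonneg.mpr hr) hroots).trans_eq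
    (map_multiset_prod (normHom : K →*₀ ℝ) _).symm

theorem Matrix.one_sub_pow_card_mul_prod_norm_diag_le_norm_det [IsAlgClosed K]
    {M : Matrix n n K} {r : ℝ} (hr : r ≤ 1) (hdiag : ∀ k, M k k ≠ 0)
    (hrow : ∀ k, ∑ j ∈ univ.erase k, ‖M k j‖ ≤ r * ‖M k k‖) :
    (1 - r) ^ Fintype.card n * ∏ k, ‖M k k‖ ≤ ‖M.det‖ := by
  set N := Matrix.diagonal (fun k => (M k k)⁻¹) * M
  have hN : ∀ k j, N k j = (M k k)⁻¹ * M k j := fun k j => Matrix.diagonal_mul _ _ _ _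
  have hNdet : ‖N.det‖ * ∏ k, ‖M k k‖ = ‖M.det‖ := by
    rw [Matrix.det_mul, Matrix.det_diagonal, ← norm_prod, ← norm_mul, mul_right_comm,
      ← prod_mul_distrib, prod_eq_one fun k _ => inv_mul_cancel₀ (hdiag k), one_mul]
  have hNrow : ∀ k, ∑ j ∈ univ.erase k, ‖N k j‖ ≤ r := fun k => by
    simp only [hN, norm_mul, norm_inv, ← mul_sum]
    rw [inv_mul_le_iff₀ (norm_pos_iff.mpr (hdiag k)), mul_comm]
    exact hrow k
  rw [← hNdet]
  exact mul_le_mul_of_nonneg_right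
    (N.one_sub_pow_card_le_norm_det hr (fun k => by rw [hN, inv_mul_cancel₀ (hdiag k)]) hNrow)
    (prod_nonneg fun k _ => norm_nonneg _)

end Gershgorin

noncomputable def backhaul {ι : Type*} [Fintype ι] (a σ : ι → ℝ) (α : ℝ) : ℝ :=
  ∑ i, Real.logb 2 ((a i + (1 + α) * σ i) / (α * σ i))

section Backhaul

variable {ι : Type*} [Fintype ι] {a σ : ι → ℝ}

theorem continuousOn_backhaul (ha : ∀ i, 0 ≤ a i) (hσ : ∀ i, 0 < σ i) :
    ContinuousOn (backhaul a σ) (Set.Ioi 0) := by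
  refine continuousOn_finsetSum _ fun i _ => ContinuousOn.logb ?_ fun α (hα : 0 < α) => ?_
  · exact ContinuousOn.div (by fun_prop) (by fun_prop) fun α (hα : 0 < α) =>
      (mul_pos hα (hσ i)).ne'
  · have := hσ i
    have := ha i
    positivity

theorem tendsto_backhaul_atTop (hσ : ∀ i, σ i ≠ 0) :
    Tendsto (backhaul a σ) atTop (𝓝 0) := by
  have hlim : ∀ i, Tendsto (fun α => 1 + (a i + σ i) / σ i * α⁻¹) atTop (𝓝 1) := fun i => by
    simpa using (tendsto_inv_atTop_zero.const_mul ((a i + σ i) / σ i)).const_add 1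
  have := tendsto_finsetSum univ fun i _ =>
    ((Real.continuousAt_logb (b := 2) one_ne_zero).tendsto.comp (hlim i))
  simp only [Real.logb_one, sum_const_zero] at this
  refine this.congr' (eventually_gt_atTop 0 |>.mono fun α hα => ?_)
  refine sum_congr rfl fun i _ => ?_
  rw [Function.comp_apply]
  congr 1
  field_simp [hσ i]
  ring

theorem exists_one_lt_backhaul_eq (ha : ∀ i, 0 ≤ a i) (hσ : ∀ i, 0 < σ i) {C : ℝ} (hC : 0 < C)
    (h1 : C < backhaul a σ 1) : ∃ α, 1 < α ∧ backhaul a σ α = C := by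
  obtain ⟨M, hMC, hM⟩ := (((tendsto_backhaul_atTop fun i => (hσ i).ne').eventually
    (gt_mem_nhds hC)).and (eventually_ge_atTop 1)).exists
  obtain ⟨α, hα, hαC⟩ := intermediate_value_Icc' hM
    ((continuousOn_backhaul ha hσ).mono fun x hx => zero_lt_one.trans_le hx.1) ⟨hMC.le, h1.le⟩
  refine ⟨α, hα.1.lt_of_ne ?_, hαC⟩
  rintro rfl
  exact h1.ne' hαC

theorem logb_two_sub_logb_two_lt_one {x y : ℝ} (hx : 0 < x) (hy : 0 < y) (hxy : x < 2 * y) :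
    Real.logb 2 x - Real.logb 2 y < 1 := by
  have := Real.logb_lt_logb one_lt_two hx hxy
  rw [Real.logb_mul two_ne_zero hy.ne', Real.logb_self_eq_one one_lt_two] at this
  linarith

theorem exists_backhaul_le_and_gap_lt [Nonempty ι] (ha : ∀ i, 0 ≤ a i) (hσ : ∀ i, 0 < σ i)
    {C : ℝ} (hC : 0 < C) :
    ∃ α : ℝ, 0 < α ∧ backhaul a σ α ≤ C ∧
      min (∑ i, Real.logb 2 ((a i + σ i) / σ i)) C -
          ∑ i, Real.logb 2 ((a i + (1 + α) * σ i) / ((1 + α) * σ i)) < Fintype.card ι := by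
  have hnum_pos : ∀ α, 0 < α → ∀ i, 0 < a i + (1 + α) * σ i := fun α hα i => by
    have := ha i; have := hσ i; positivity
  have hsum_lt : ∀ f g : ι → ℝ, (∀ i, f i - g i < 1) → ∑ i, f i - ∑ i, g i < Fintype.card ι :=
    fun f g h => by
      rw [← sum_sub_distrib, Fintype.card_eq_sum_ones, Nat.cast_sum, Nat.cast_one]
      exact sum_lt_sum_of_nonempty univ_nonempty fun i _ => h i
  by_cases h1 : backhaul a σ 1 ≤ C
  · refine ⟨1, one_pos, h1, (sub_le_sub_right (min_le_left _ _) _).trans_lt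
      (hsum_lt _ _ fun i => logb_two_sub_logb_two_lt_one ?_ ?_ ?_)⟩
    · have := ha i; have := hσ i; positivity
    · have := hnum_pos 1 one_pos i; have := hσ i; positivity
    · have := hσ i
      rw [show 2 * ((a i + (1 + 1) * σ i) / ((1 + 1) * σ i)) = (a i + σ i) / σ i + 1 by
        field_simp; ring]
      linarith
  · obtain ⟨α, hα1, hαC⟩ := exists_one_lt_backhaul_eq ha hσ hC (not_le.mp h1)
    have hα : 0 < α := zero_lt_one.trans hα1
    refine ⟨α, hα, hαC.le, (sub_le_sub_right (min_le_right _ _) _).trans_lt ?_⟩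
    rw [← hαC]
    refine hsum_lt _ _ fun i => logb_two_sub_logb_two_lt_one ?_ ?_ ?_
    · have := hnum_pos α hα i; have := hσ i; positivity
    · have := hnum_pos α hα i; have := hσ i; positivity
    · have := hnum_pos α hα i; have := hσ i
      rw [mul_div_assoc', div_lt_div_iff₀ (by positivity) (by positivity)]
      nlinarith [mul_pos (mul_pos (hnum_pos α hα i) (hσ i)) (sub_pos.mpr hα1)]

end Backhaul

section AddDiagonal

variable {n : Type*} {A : Matrix n n ℂ} {t : n → ℝ}

theorem Matrix.PosSemidef.re_apply_self_nonneg (hA : A.PosSemidef) (i : n) : 0 ≤ (A i i).re :=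
  (Complex.nonneg_iff.mp hA.diag_nonneg).1

variable [DecidableEq n]

theorem Matrix.IsHermitian.add_diagonal_apply_self (hA : A.IsHermitian) (i : n) :
    (A + Matrix.diagonal fun k => (t k : ℂ)) i i = (((A i i).re + t i : ℝ) : ℂ) := by
  rw [Matrix.add_apply, Matrix.diagonal_apply_eq, ← hA.coe_re_apply_self i]
  push_cast
  rfl

theorem Matrix.PosSemidef.posDef_add_diagonal (hA : A.PosSemidef) (ht : ∀ i, 0 < t i) :
    (A + Matrix.diagonal fun k => (t k : ℂ)).PosDef :=
  Matrix.PosDef.posSemidef_add hA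
    (Matrix.PosDef.diagonal fun i => Complex.zero_lt_real.mpr (ht i))

variable [Fintype n]

theorem Matrix.sum_erase_norm_add_diagonal_apply (d : n → ℂ) (k : n) :
    ∑ j ∈ univ.erase k, ‖(A + Matrix.diagonal d) k j‖ = ∑ j ∈ univ.erase k, ‖A k j‖ :=
  sum_congr rfl fun j hj => by
    rw [Matrix.add_apply, Matrix.diagonal_apply_ne _ (ne_of_mem_erase hj).symm, add_zero]

theorem Matrix.PosSemidef.re_det_add_diagonal_le (hA : A.PosSemidef) (ht : ∀ i, 0 < t i) :
    (A + Matrix.diagonal fun k => (t k : ℂ)).det.re ≤ ∏ i, ((A i i).re + t i) := by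
  simpa only [hA.1.add_diagonal_apply_self, RCLike.re_to_complex, Complex.ofReal_re] using
    (hA.posDef_add_diagonal ht).re_det_le_prod_re_diag

theorem Matrix.PosSemidef.one_sub_inv_pow_mul_prod_le_re_det_add_diagonal (hA : A.PosSemidef)
    (ht : ∀ i, 0 < t i) {κ : ℝ} (hκ : 1 < κ)
    (hdom : ∀ k, κ * ∑ j ∈ univ.erase k, ‖A k j‖ ≤ (A k k).re + t k) :
    (1 - κ⁻¹) ^ Fintype.card n * ∏ i, ((A i i).re + t i) ≤
      (A + Matrix.diagonal fun k => (t k : ℂ)).det.re := by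
  have hdiag_pos : ∀ i, 0 < (A i i).re + t i := fun i =>
    add_pos_of_nonneg_of_pos (hA.re_apply_self_nonneg i) (ht i)
  have hnorm_diag : ∀ i, ‖(A + Matrix.diagonal fun k => (t k : ℂ)) i i‖ = (A i i).re + t i :=
    fun i => by rw [hA.1.add_diagonal_apply_self, Complex.norm_of_nonneg (hdiag_pos i).le]
  calc (1 - κ⁻¹) ^ Fintype.card n * ∏ i, ((A i i).re + t i)
      = (1 - κ⁻¹) ^ Fintype.card n * ∏ i, ‖(A + Matrix.diagonal fun k => (t k : ℂ)) i i‖ := by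
        simp only [hnorm_diag]
    _ ≤ ‖(A + Matrix.diagonal fun k => (t k : ℂ)).det‖ :=
        Matrix.one_sub_pow_card_mul_prod_norm_diag_le_norm_det (inv_le_one_of_one_le₀ hκ.le)
          (fun k => norm_pos_iff.mp ((hnorm_diag k).symm ▸ hdiag_pos k)) fun k => by
            rw [Matrix.sum_erase_norm_add_diagonal_apply, hnorm_diag,
              le_inv_mul_iff₀ (zero_lt_one.trans hκ)]
            exact hdom k
    _ = (A + Matrix.diagonal fun k => (t k : ℂ)).det.re :=
        (Complex.re_eq_norm.mpr (hA.posDef_add_diagonal ht).det_pos.le).symm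

theorem Matrix.re_det_diagonal_ofReal (t : n → ℝ) :
    (Matrix.diagonal fun k => (t k : ℂ)).det.re = ∏ i, t i := by
  rw [Matrix.det_diagonal, ← Complex.ofReal_prod, Complex.ofReal_re]

theorem Matrix.PosSemidef.logb_re_det_add_diagonal_div_le (hA : A.PosSemidef)
    (ht : ∀ i, 0 < t i) {b : ℝ} (hb : 1 < b) :
    Real.logb b ((A + Matrix.diagonal fun k => (t k : ℂ)).det.re /
        (Matrix.diagonal fun k => (t k : ℂ)).det.re) ≤
      ∑ i, Real.logb b (((A i i).re + t i) / t i) := by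
  have hprod_t : 0 < ∏ i, t i := prod_pos fun i _ => ht i
  have hdet_pos : 0 < (A + Matrix.diagonal fun k => (t k : ℂ)).det.re :=
    (Complex.pos_iff.mp (hA.posDef_add_diagonal ht).det_pos).1
  rw [Matrix.re_det_diagonal_ofReal, ← Real.logb_prod _ _ fun i _ =>
    (div_pos (add_pos_of_nonneg_of_pos (hA.re_apply_self_nonneg i) (ht i)) (ht i)).ne',
    prod_div_distrib]
  exact Real.logb_le_logb_of_le hb (div_pos hdet_pos hprod_t)
    (div_le_div_of_nonneg_right (hA.re_det_add_diagonal_le ht) hprod_t.le)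

theorem Matrix.PosSemidef.le_logb_re_det_add_diagonal_div (hA : A.PosSemidef)
    (ht : ∀ i, 0 < t i) {κ : ℝ} (hκ : 1 < κ)
    (hdom : ∀ k, κ * ∑ j ∈ univ.erase k, ‖A k j‖ ≤ (A k k).re + t k) {b : ℝ} (hb : 1 < b) :
    Fintype.card n * Real.logb b (1 - κ⁻¹) + ∑ i, Real.logb b (((A i i).re + t i) / t i) ≤
      Real.logb b ((A + Matrix.diagonal fun k => (t k : ℂ)).det.re /
        (Matrix.diagonal fun k => (t k : ℂ)).det.re) := by
  have hκ' : 0 < 1 - κ⁻¹ := sub_pos.mpr (inv_lt_one_of_one_lt₀ hκ)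
  have hprod_t : 0 < ∏ i, t i := prod_pos fun i _ => ht i
  have hdiag_pos : ∀ i, 0 < (A i i).re + t i := fun i =>
    add_pos_of_nonneg_of_pos (hA.re_apply_self_nonneg i) (ht i)
  have hratio : ∀ i, 0 < ((A i i).re + t i) / t i := fun i => div_pos (hdiag_pos i) (ht i)
  rw [← Real.logb_pow, ← Real.logb_prod _ _ fun i _ => (hratio i).ne',
    ← Real.logb_mul (by positivity) (prod_pos fun i _ => hratio i).ne',
    Matrix.re_det_diagonal_ofReal, prod_div_distrib, mul_div_assoc']
  exact Real.logb_le_logb_of_le hb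
    (div_pos (mul_pos (pow_pos hκ' _) (prod_pos fun i _ => hdiag_pos i)) hprod_t)
    (div_le_div_of_nonneg_right
      (hA.one_sub_inv_pow_mul_prod_le_re_det_add_diagonal ht hκ hdom) hprod_t.le)

end AddDiagonal

/-- Constant-gap optimality of VMAC-SU under diagonal dominance (determinant form): if
`A + D` is `κ`-strictly diagonally dominant, then for every sum backhaul capacity `C > 0`
there is `α > 0` (quantization noise `qᵢ = ασᵢ²`) such that the single-user-compression
backhaul requirement `∑ᵢ log₂((A(i,i)+(1+α)σᵢ²)/(ασᵢ²))` is at most `C` and the gap between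
the cut-set bound `min{log₂(det(A+D)/det D), C}` and the achievable sum rate
`log₂(det(A+(1+α)D)/det((1+α)D))` is less than `L(1 + log₂(κ/(κ−1)))` bits. -/
theorem stmt_12 {L : ℕ} (hL : 1 ≤ L) (κ : ℝ) (hκ : 1 < κ)
    (A : Matrix (Fin L) (Fin L) ℂ) (hA : A.PosSemidef)
    (σ : Fin L → ℝ) (hσ : ∀ i, 0 < σ i)
    (hdd : ∀ i : Fin L,
      κ * ∑ j ∈ Finset.univ.erase i,
          ‖(A + Matrix.diagonal fun k => (σ k : ℂ)) i j‖ ≤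
        ‖(A + Matrix.diagonal fun k => (σ k : ℂ)) i i‖)
    (C : ℝ) (hC : 0 < C) :
    let D : Matrix (Fin L) (Fin L) ℂ := Matrix.diagonal fun i => (σ i : ℂ)
    ∃ α : ℝ, 0 < α ∧
      (∑ i : Fin L, Real.logb 2 (((A i i).re + (1 + α) * σ i) / (α * σ i))) ≤ C ∧
      min (Real.logb 2 ((A + D).det.re / D.det.re)) C -
          Real.logb 2 ((A + (1 + α) • D).det.re / (((1 + α) • D).det.re)) <
        L * (1 + Real.logb 2 (κ / (κ - 1))) := by
  intro D
  have hdom : ∀ k, κ * ∑ j ∈ univ.erase k, ‖A k j‖ ≤ (A k k).re + σ k := fun k => by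
    simpa only [Matrix.sum_erase_norm_add_diagonal_apply, hA.1.add_diagonal_apply_self,
      Complex.norm_of_nonneg (add_pos_of_nonneg_of_pos (hA.re_apply_self_nonneg k) (hσ k)).le]
      using hdd k
  have : Nonempty (Fin L) := ⟨⟨0, hL⟩⟩
  obtain ⟨α, hα, hbackhaul, hgap⟩ :=
    exists_backhaul_le_and_gap_lt hA.re_apply_self_nonneg hσ hC
  refine ⟨α, hα, hbackhaul, ?_⟩
  have hsmul : (1 + α) • D = Matrix.diagonal fun i => (((1 + α) * σ i : ℝ) : ℂ) := by
    rw [← Matrix.diagonal_smul]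
    congr 1
    ext i
    simp
  have hcapacity : Real.logb 2 ((A + D).det.re / D.det.re) ≤ _ :=
    hA.logb_re_det_add_diagonal_div_le hσ one_lt_two
  have hrate := hA.le_logb_re_det_add_diagonal_div (t := fun i => (1 + α) * σ i)
    (fun i => by have := hσ i; positivity) hκ
    (fun k => (hdom k).trans (by have := hσ k; nlinarith)) one_lt_two
  have hκ_logb : Real.logb 2 (1 - κ⁻¹) = -Real.logb 2 (κ / (κ - 1)) := by
    rw [← Real.logb_inv, inv_div]
    congr 1
    field_simp
  rw [Fintype.card_fin, hκ_logb] at hrate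
  rw [Fintype.card_fin] at hgap
  rw [hsmul]
  linarith [min_le_min_right C hcapacity]
end

section
/- Let S ∈ ℂ^{L×L} be a fixed Hermitian positive semidefinite matrix. Then the function f : (0,∞)^L → ℝ defined by f(q₁,…,q_L) = log₂ det( S + diag(q₁,…,q_L) ) − ∑_{i=1}^L log₂ qᵢ is convex on the convex set (0,∞)^L. (Note S + diag(q) is Hermitian positive definite for q ∈ (0,∞)^L, so its determinant is a positive real.) -/
/-!
Expanding the determinant along the diagonal,
`det (S + diag q) / ∏ᵢ qᵢ = ∑ₛ det S[s,s] * ∏_{i ∈ s} qᵢ⁻¹`, a combination with nonnegative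
coefficients (principal minors of `S`) of products of the functions `qᵢ⁻¹`. Each `qᵢ⁻¹` is
log-convex on the positive orthant by weighted AM-GM, and log-convexity survives products and,
by Hölder's inequality, sums. Hence `log₂ det (S + diag q) - ∑ᵢ log₂ qᵢ`, the logarithm of that
quotient, is convex.
-/

open Finset Real
open scoped ComplexOrder

section LogConvex

variable {E ι : Type*} [AddCommGroup E] [Module ℝ E]

/-- Log-convexity in multiplicative form; unlike convexity of `log ∘ f` it allows zeros. -/
structure LogConvexOn (s : Set E) (f : E → ℝ) : Prop where
  convex : Convex ℝ s
  nonneg : ∀ x ∈ s, 0 ≤ f x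
  le_rpow_mul_rpow : ∀ ⦃x⦄, x ∈ s → ∀ ⦃y⦄, y ∈ s → ∀ ⦃a b : ℝ⦄, 0 < a → 0 < b → a + b = 1 →
    f (a • x + b • y) ≤ f x ^ a * f y ^ b

variable {s : Set E} {f g : E → ℝ}

theorem LogConvexOn.congr (hf : LogConvexOn s f) (hfg : Set.EqOn f g s) : LogConvexOn s g :=
  ⟨hf.convex, fun x hx => hfg hx ▸ hf.nonneg x hx, fun x hx y hy a b ha hb hab => by
    rw [← hfg hx, ← hfg hy, ← hfg (hf.convex hx hy ha.le hb.le hab)]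
    exact hf.le_rpow_mul_rpow hx hy ha hb hab⟩

theorem logConvexOn_const (hs : Convex ℝ s) {c : ℝ} (hc : 0 ≤ c) : LogConvexOn s fun _ => c :=
  ⟨hs, fun _ _ => hc, fun _ _ _ _ a b ha hb hab => by
    rw [← rpow_add' hc (by linarith), hab, rpow_one]⟩

theorem LogConvexOn.mul (hf : LogConvexOn s f) (hg : LogConvexOn s g) :
    LogConvexOn s (f * g) := by
  refine ⟨hf.convex, fun x hx => mul_nonneg (hf.nonneg x hx) (hg.nonneg x hx),
    fun x hx y hy a b ha hb hab => ?_⟩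
  have hfx := hf.nonneg x hx
  have hfy := hf.nonneg y hy
  calc f (a • x + b • y) * g (a • x + b • y)
      ≤ (f x ^ a * f y ^ b) * (g x ^ a * g y ^ b) :=
        mul_le_mul (hf.le_rpow_mul_rpow hx hy ha hb hab) (hg.le_rpow_mul_rpow hx hy ha hb hab)
          (hg.nonneg _ (hf.convex hx hy ha.le hb.le hab)) (by positivity)
    _ = (f x * g x) ^ a * (f y * g y) ^ b := by
        rw [mul_rpow hfx (hg.nonneg x hx), mul_rpow hfy (hg.nonneg y hy)]; ring

theorem LogConvexOn.prod (hs : Convex ℝ s) {t : Finset ι} {f : ι → E → ℝ}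
    (hf : ∀ k ∈ t, LogConvexOn s (f k)) : LogConvexOn s fun x => ∏ k ∈ t, f k x := by
  classical
  induction t using Finset.induction_on with
  | empty => simpa using logConvexOn_const hs zero_le_one
  | insert k t hk ih =>
    simp_rw [prod_insert hk]
    exact (hf k (mem_insert_self k t)).mul (ih fun j hj => hf j (mem_insert_of_mem hj))

theorem LogConvexOn.sum (hs : Convex ℝ s) {t : Finset ι} {f : ι → E → ℝ}
    (hf : ∀ k ∈ t, LogConvexOn s (f k)) : LogConvexOn s fun x => ∑ k ∈ t, f k x := by
  refine ⟨hs, fun x hx => sum_nonneg fun k hk => (hf k hk).nonneg x hx,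
    fun x hx y hy a b ha hb hab => ?_⟩
  have hpq : HolderConjugate a⁻¹ b⁻¹ := ⟨by simpa using hab, inv_pos.2 ha, inv_pos.2 hb⟩
  have hroot : ∀ z ∈ s, ∀ c : ℝ, c ≠ 0 → ∑ k ∈ t, (f k z ^ c) ^ c⁻¹ = ∑ k ∈ t, f k z :=
    fun z hz c hc => sum_congr rfl fun k hk => rpow_rpow_inv ((hf k hk).nonneg z hz) hc
  calc ∑ k ∈ t, f k (a • x + b • y)
      ≤ ∑ k ∈ t, f k x ^ a * f k y ^ b :=
        sum_le_sum fun k hk => (hf k hk).le_rpow_mul_rpow hx hy ha hb hab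
    _ ≤ (∑ k ∈ t, (f k x ^ a) ^ a⁻¹) ^ (1 / a⁻¹) * (∑ k ∈ t, (f k y ^ b) ^ b⁻¹) ^ (1 / b⁻¹) :=
        inner_le_Lp_mul_Lq_of_nonneg t hpq
          (fun k hk => rpow_nonneg ((hf k hk).nonneg x hx) a)
          (fun k hk => rpow_nonneg ((hf k hk).nonneg y hy) b)
    _ = (∑ k ∈ t, f k x) ^ a * (∑ k ∈ t, f k y) ^ b := by
        rw [hroot x hx a ha.ne', hroot y hy b hb.ne', one_div, one_div, inv_inv, inv_inv]

theorem LogConvexOn.convexOn_logb {b : ℝ} (hb : 1 < b) (hf : LogConvexOn s f)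
    (hpos : ∀ x ∈ s, 0 < f x) : ConvexOn ℝ s fun x => logb b (f x) := by
  refine convexOn_iff_forall_pos.2 ⟨hf.convex, fun x hx y hy a c ha hc hac => ?_⟩
  have hz := hf.convex hx hy ha.le hc.le hac
  calc logb b (f (a • x + c • y))
      ≤ logb b (f x ^ a * f y ^ c) :=
        logb_le_logb_of_le hb (hpos _ hz) (hf.le_rpow_mul_rpow hx hy ha hc hac)
    _ = a • logb b (f x) + c • logb b (f y) := by
        rw [logb_mul (rpow_pos_of_pos (hpos x hx) a).ne' (rpow_pos_of_pos (hpos y hy) c).ne',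
          logb_rpow_eq_mul_logb_of_pos (hpos x hx), logb_rpow_eq_mul_logb_of_pos (hpos y hy),
          smul_eq_mul, smul_eq_mul]

theorem convex_setOf_forall_pos : Convex ℝ {x : ι → ℝ | ∀ i, 0 < x i} :=
  fun _ hx _ hy _ _ ha hb hab i => by simpa using convex_Ioi (0 : ℝ) (hx i) (hy i) ha hb hab

theorem logConvexOn_inv_apply (i : ι) :
    LogConvexOn {x : ι → ℝ | ∀ i, 0 < x i} fun x => (x i)⁻¹ := by
  refine ⟨convex_setOf_forall_pos, fun x hx => (inv_pos.2 (hx i)).le,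
    fun x hx y hy a b ha hb hab => ?_⟩
  calc (a * x i + b * y i)⁻¹
      ≤ (x i ^ a * y i ^ b)⁻¹ :=
        inv_anti₀ (by have := hx i; have := hy i; positivity)
          (geom_mean_le_arith_mean2_weighted ha.le hb.le (hx i).le (hy i).le hab)
    _ = (x i)⁻¹ ^ a * (y i)⁻¹ ^ b := by
        rw [mul_inv, inv_rpow (hx i).le, inv_rpow (hy i).le]

end LogConvex

namespace Matrix
variable {n R : Type*} [Fintype n] [DecidableEq n] [CommRing R]

theorem det_add_diagonal (M : Matrix n n R) (d : n → R) :
    (M + diagonal d).det =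
      ∑ s : Finset n, (∏ i ∈ sᶜ, d i) * (M.submatrix ((↑) : s → n) (↑)).det := by
  refine (detRowAlternating.map_add_univ M (diagonal d)).trans (sum_congr rfl fun s _ => ?_)
  have hrows : s.piecewise M (diagonal d) =
      sᶜ.piecewise (fun i => d i • s.piecewise M.row (row 1) i) (s.piecewise M.row (row 1)) := by
    ext i j
    by_cases hi : i ∈ s <;> simp [hi, Finset.piecewise, row, diagonal_apply, one_apply]
  rw [hrows, ← det_piecewise_one_eq_submatrix_det M s, ← smul_eq_mul]
  exact detRowAlternating.toMultilinearMap.map_piecewise_smul _ _ _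

variable {𝕜 : Type*} [RCLike 𝕜]

theorem re_det_add_diagonal_div_prod (S : Matrix n n 𝕜) {q : n → ℝ} (hq : ∀ i, q i ≠ 0) :
    RCLike.re (S + diagonal fun i => (q i : 𝕜)).det / ∏ i, q i =
      ∑ s : Finset n, RCLike.re (S.submatrix ((↑) : s → n) (↑)).det * ∏ i ∈ s, (q i)⁻¹ := by
  rw [det_add_diagonal, map_sum, sum_div]
  refine sum_congr rfl fun s _ => ?_
  rw [← prod_mul_prod_compl s, ← RCLike.ofReal_prod, RCLike.re_ofReal_mul, prod_inv_distrib]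
  have := prod_ne_zero_iff.2 fun i (_ : i ∈ s) => hq i
  have := prod_ne_zero_iff.2 fun i (_ : i ∈ sᶜ) => hq i
  field_simp

theorem PosSemidef.re_det_add_diagonal_pos {S : Matrix n n 𝕜} (hS : S.PosSemidef) {q : n → ℝ}
    (hq : ∀ i, 0 < q i) : 0 < RCLike.re (S + diagonal fun i => (q i : 𝕜)).det := by
  have hD : (diagonal fun i => (q i : 𝕜)).PosDef := .diagonal fun i => by simpa using hq i
  exact (RCLike.pos_iff.1 (PosDef.posSemidef_add hS hD).det_pos).1

theorem PosSemidef.logConvexOn_re_det_add_diagonal_div_prod {S : Matrix n n 𝕜}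
    (hS : S.PosSemidef) :
    LogConvexOn {q : n → ℝ | ∀ i, 0 < q i}
      fun q => RCLike.re (S + diagonal fun i => (q i : 𝕜)).det / ∏ i, q i := by
  have hminor (s : Finset n) : 0 ≤ RCLike.re (S.submatrix ((↑) : s → n) (↑)).det :=
    (RCLike.nonneg_iff.1 (hS.submatrix _).det_nonneg).1
  refine (LogConvexOn.sum convex_setOf_forall_pos fun s _ =>
      (logConvexOn_const convex_setOf_forall_pos (hminor s)).mul
        (LogConvexOn.prod convex_setOf_forall_pos fun i _ => logConvexOn_inv_apply i)).congr
    fun q hq => (re_det_add_diagonal_div_prod S fun i => (hq i).ne').symm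

end Matrix

/-- For a fixed Hermitian positive semidefinite `S`, the backhaul-constraint function
`q ↦ log₂ det(S + diag(q)) − ∑ᵢ log₂ qᵢ` is convex on the positive orthant `(0,∞)^L`. -/
theorem stmt_13 {L : ℕ} (S : Matrix (Fin L) (Fin L) ℂ) (hS : S.PosSemidef) :
    ConvexOn ℝ {q : Fin L → ℝ | ∀ i, 0 < q i}
      (fun q =>
        Real.logb 2 ((S + Matrix.diagonal fun i => (q i : ℂ)).det.re) -
          ∑ i : Fin L, Real.logb 2 (q i)) := by
  have hdet := fun (q : Fin L → ℝ) (hq : ∀ i, 0 < q i) => hS.re_det_add_diagonal_pos hq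
  have hprod := fun (q : Fin L → ℝ) (hq : ∀ i, 0 < q i) => prod_pos fun i (_ : i ∈ univ) => hq i
  refine (hS.logConvexOn_re_det_add_diagonal_div_prod.convexOn_logb one_lt_two
    fun q hq => div_pos (hdet q hq) (hprod q hq)).congr fun q hq => ?_
  dsimp only
  rw [logb_div (hdet q hq).ne' (hprod q hq).ne', logb_prod _ _ fun i _ => (hq i).ne']
  rfl
end
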